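/- Let 0 < α < 1, σ = 1 − α/2, and j ≥ 1. With a_0^{(α,σ)} = σ^{1−α}, a_l^{(α,σ)} = (l+σ)^{1−α} − (l−1+σ)^{1−α} for l ≥ 1, and b_l^{(α,σ)} = (1/(2−α))[(l+σ)^{2−α} − (l−1+σ)^{2−α}] − (1/2)[(l+σ)^{1−α} + (l−1+σ)^{1−α}] for l ≥ 1, define c_j^{(α,σ)} = a_j^{(α,σ)} − b_j^{(α,σ)}. Then c_j^{(α,σ)} > ((1−α)/2) (j+σ)^{−α}. -/

import Mathlib

/-!
With `y = j + σ`, `x = y - 1 = j - 1 + σ > 0` and `β = 1 - α`, the coefficient equals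
`(y^β - x^β) - ((y^(β+1) - x^(β+1)) / (β+1) - (y^β + x^β) / 2)`.
The power `t ↦ t^(β+1)` is convex, so its secant slope over `[x, y]` is at most `(β+1) y^β`;
this leaves at least `(y^β - x^β) / 2`. The power `t ↦ t^β` is strictly concave, so
`y^β - x^β > β y^(β-1)`, which is the claim. Both tangent bounds are Bernoulli's inequality
`(1+s)^p ≶ 1 + p s` applied to `s = x/y - 1` and rescaled by `y^p`.
-/

open Real

lemma one_add_mul_div_sub_one_mul_rpow {x y : ℝ} (hy : 0 < y) (p : ℝ) :
    (1 + p * (x / y - 1)) * y ^ p = y ^ p - p * y ^ (p - 1) * (y - x) := by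
  rw [rpow_sub_one hy.ne']
  field_simp
  ring

lemma div_rpow_mul_rpow {x y : ℝ} (hx : 0 ≤ x) (hy : 0 < y) (p : ℝ) :
    (x / y) ^ p * y ^ p = x ^ p := by
  rw [div_rpow hx hy.le, div_mul_cancel₀ _ (rpow_pos_of_pos hy p).ne']

lemma mul_rpow_sub_one_mul_sub_lt_rpow_sub_rpow {x y p : ℝ} (hx : 0 ≤ x) (hxy : x < y)
    (hp0 : 0 < p) (hp1 : p < 1) :
    p * y ^ (p - 1) * (y - x) < y ^ p - x ^ p := by
  have hy : 0 < y := hx.trans_lt hxy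
  have hs : -1 ≤ x / y - 1 := by linarith [div_nonneg hx hy.le]
  have hs0 : x / y - 1 ≠ 0 := by
    rw [sub_ne_zero]
    exact ((div_lt_one hy).mpr hxy).ne
  have hbern := rpow_one_add_lt_one_add_mul_self hs hs0 hp0 hp1
  rw [add_sub_cancel] at hbern
  have := mul_lt_mul_of_pos_right hbern (rpow_pos_of_pos hy p)
  rw [div_rpow_mul_rpow hx hy, one_add_mul_div_sub_one_mul_rpow hy] at this
  linarith

lemma rpow_sub_rpow_le_mul_rpow_sub_one_mul_sub {x y p : ℝ} (hx : 0 ≤ x) (hy : 0 < y)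
    (hp : 1 ≤ p) :
    y ^ p - x ^ p ≤ p * y ^ (p - 1) * (y - x) := by
  have hs : -1 ≤ x / y - 1 := by linarith [div_nonneg hx hy.le]
  have hbern := one_add_mul_self_le_rpow_one_add hs hp
  rw [add_sub_cancel] at hbern
  have := mul_le_mul_of_nonneg_right hbern (rpow_pos_of_pos hy p).le
  rw [div_rpow_mul_rpow hx hy, one_add_mul_div_sub_one_mul_rpow hy] at this
  linarith

lemma half_mul_rpow_sub_one_lt_coeff {x β : ℝ} (hx : 0 ≤ x) (hβ0 : 0 < β) (hβ1 : β < 1) :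
    (β / 2) * (x + 1) ^ (β - 1) <
      ((x + 1) ^ β - x ^ β) -
        ((1 / (β + 1)) * ((x + 1) ^ (β + 1) - x ^ (β + 1)) -
          (1 / 2) * ((x + 1) ^ β + x ^ β)) := by
  have hconcave := mul_rpow_sub_one_mul_sub_lt_rpow_sub_rpow hx (lt_add_one x) hβ0 hβ1
  have hconvex := rpow_sub_rpow_le_mul_rpow_sub_one_mul_sub (y := x + 1) hx (by positivity)
    (by linarith : 1 ≤ β + 1)
  rw [add_sub_cancel_right, add_sub_cancel_left, mul_one] at hconvex
  rw [add_sub_cancel_left, mul_one] at hconcave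
  have hsecant : (1 / (β + 1)) * ((x + 1) ^ (β + 1) - x ^ (β + 1)) ≤ (x + 1) ^ β := by
    rw [one_div_mul_eq_div, div_le_iff₀ (by linarith)]
    linarith
  linarith

theorem c_j_lower_bound (α σ : ℝ) (hα0 : 0 < α) (hα1 : α < 1) (hσ : σ = 1 - α / 2)
    (j : ℕ) (hj : 1 ≤ j) :
    ((((j : ℝ) + σ) ^ (1 - α) - ((j : ℝ) - 1 + σ) ^ (1 - α)) -
        ((1 / (2 - α)) * (((j : ℝ) + σ) ^ (2 - α) - ((j : ℝ) - 1 + σ) ^ (2 - α)) -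
          (1 / 2) * (((j : ℝ) + σ) ^ (1 - α) + ((j : ℝ) - 1 + σ) ^ (1 - α)))) >
      ((1 - α) / 2) * ((j : ℝ) + σ) ^ (-α) := by
  have hj1 : (1 : ℝ) ≤ j := by exact_mod_cast hj
  have hx : 0 ≤ (j : ℝ) - 1 + σ := by rw [hσ]; linarith
  have hbound := half_mul_rpow_sub_one_lt_coeff hx (by linarith : 0 < 1 - α) (by linarith)
  rw [show (j : ℝ) - 1 + σ + 1 = j + σ by ring, show 1 - α + 1 = 2 - α by ring,
    show 1 - α - 1 = -α by ring] at hbound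
  exact hbound
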